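/- Let α be an irrational number not equivalent to (1+√5)/2 and not equivalent to (1+√17)/2, whose continued fraction expansion has aₙ ∈ {1, 3} for infinitely many n. If for infinitely many n one has a_{n−2} = a_{n−1} = 1, aₙ = 3, a_{n+1} = a_{n+2} = a_{n+3} = 1, then 𝔨(α) ≤ 180/187. -/

import Mathlib

open Filter

/-- The tails `αₙ = [aₙ; aₙ₊₁, …]` of the continued fraction of `α`. -/
noncomputable def cfTail (α : ℝ) : ℕ → ℝ
  | 0 => α
  | n + 1 => (Int.fract (cfTail α n))⁻¹

/-- The partial quotients `aₙ` of the continued fraction of `α`. -/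
noncomputable def cfDigit (α : ℝ) (n : ℕ) : ℤ := ⌊cfTail α n⌋

/-- Value `[a; b, c, …]` of a finite continued fraction given by a list. -/
noncomputable def finCF : List ℤ → ℝ
  | [] => 0
  | a :: l => (a : ℝ) + (finCF l)⁻¹

/-- `α*ₙ = [0; aₙ, aₙ₋₁, …, a₁]`. -/
noncomputable def cfStar (α : ℝ) (n : ℕ) : ℝ :=
  (finCF (((List.range' 1 n).reverse).map (cfDigit α)))⁻¹

/-- Numerators `pₙ` of the convergents of `α`. -/
noncomputable def cfNum (α : ℝ) : ℕ → ℤ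
  | 0 => cfDigit α 0
  | 1 => cfDigit α 1 * cfDigit α 0 + 1
  | n + 2 => cfDigit α (n + 2) * cfNum α (n + 1) + cfNum α n

/-- Denominators `qₙ` of the convergents of `α`. -/
noncomputable def cfDen (α : ℝ) : ℕ → ℤ
  | 0 => 1
  | 1 => cfDigit α 1
  | n + 2 => cfDigit α (n + 2) * cfDen α (n + 1) + cfDen α n

/-- The irrationality measure function `ψ_α^[2]` for "second best" approximations. -/
noncomputable def psi2 (α : ℝ) (t : ℝ) : ℝ :=
  sInf { x : ℝ | ∃ p q : ℤ, 1 ≤ q ∧ (q : ℝ) ≤ t ∧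
    (∀ n : ℕ, (p, q) ≠ (cfNum α n, cfDen α n)) ∧ x = |(q : ℝ) * α - (p : ℝ)| }

/-- The Diophantine constant `𝔨(α) = liminf_{t → ∞} t · ψ_α^[2](t)`. -/
noncomputable def kConst (α : ℝ) : ℝ := liminf (fun t : ℝ => t * psi2 α t) atTop

/-- Two numbers are equivalent if the tails of their continued fraction expansions
coincide: `a_{n+k} = b_{m+k}` for all `k ≥ 1`, for some positive integers `m`, `n`. -/
def CFEquiv (α β : ℝ) : Prop :=
  ∃ n m : ℕ, 0 < n ∧ 0 < m ∧ ∀ k : ℕ, 0 < k → cfDigit α (n + k) = cfDigit β (m + k)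

/-- The spectrum `𝕃₂` of values of `𝔨`. -/
def L2 : Set ℝ := { l : ℝ | ∃ α : ℝ, Irrational α ∧ l = kConst α }

/-- `κ¹ₙ(α) = (1 + α*ₙ₋₁)(αₙ − 1)/(αₙ + α*ₙ₋₁)`. -/
noncomputable def kappa1 (α : ℝ) (n : ℕ) : ℝ :=
  (1 + cfStar α (n - 1)) * (cfTail α n - 1) / (cfTail α n + cfStar α (n - 1))

/-- `κ²ₙ(α) = (1 − α*ₙ)(αₙ₊₁ + 1)/(αₙ₊₁ + α*ₙ)`. -/
noncomputable def kappa2 (α : ℝ) (n : ℕ) : ℝ :=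
  (1 - cfStar α n) * (cfTail α (n + 1) + 1) / (cfTail α (n + 1) + cfStar α n)

/-- `κ⁴ₙ(α) = 4/(αₙ + α*ₙ₋₁)`. -/
noncomputable def kappa4 (α : ℝ) (n : ℕ) : ℝ :=
  4 / (cfTail α n + cfStar α (n - 1))

/-!
The pair `(2pₙ, 2qₙ)` is never a convergent, since `pₙ` and `qₙ` are coprime. Hence
`2qₙ · ψ_α^[2](2qₙ) ≤ 4qₙ|qₙα − pₙ| = 4/(αₙ₊₁ + α*ₙ) = κ⁴ₙ₊₁(α)`, and it suffices to find
infinitely many `n` with `κ⁴ₙ(α) ≤ 180/187`. Let `aₙ, …, aₙ₊₅ = 1, 1, 3, 1, 1, 1`. If `aₙ₋₁ ≥ 4`,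
then `αₙ₋₁ > 4 + 1/2`, so `κ⁴ₙ₋₁(α) < 8/9`. If `aₙ₋₁ ≤ 3`, then `αₙ₊₂ > [3; 1, 1, 2] = 18/5`
and `α*ₙ₊₁ ≥ [0; 1, 1, 4] = 5/9`, so `κ⁴ₙ₊₂(α) ≤ 4/(18/5 + 5/9) = 180/187`.
-/

section

variable {α : ℝ}

theorem cfTail_sub_cfDigit (α : ℝ) (n : ℕ) :
    cfTail α n - cfDigit α n = (cfTail α (n + 1))⁻¹ := by
  rw [cfTail.eq_2, inv_inv, cfDigit, Int.self_sub_floor]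

theorem irrational_cfTail (hα : Irrational α) : ∀ n, Irrational (cfTail α n)
  | 0 => hα
  | n + 1 => by
    rw [← inv_inv (cfTail α (n + 1)), ← cfTail_sub_cfDigit]
    exact ((irrational_cfTail hα n).sub_intCast _).inv

theorem one_lt_cfTail_succ (hα : Irrational α) (n : ℕ) : 1 < cfTail α (n + 1) :=
  (one_lt_inv₀ (Int.fract_pos.2 ((irrational_cfTail hα n).ne_int _))).2 (Int.fract_lt_one _)

theorem one_le_cfDigit_succ (hα : Irrational α) (n : ℕ) : 1 ≤ cfDigit α (n + 1) :=
  Int.le_floor.2 (by exact_mod_cast (one_lt_cfTail_succ hα n).le)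

theorem cfTail_sub_cfDigit_mul_cfTail_succ (hα : Irrational α) (n : ℕ) :
    (cfTail α n - cfDigit α n) * cfTail α (n + 1) = 1 := by
  rw [cfTail_sub_cfDigit]
  exact inv_mul_cancel₀ (zero_lt_one.trans (one_lt_cfTail_succ hα n)).ne'

theorem cfTail_lt_of_lt_cfTail_succ {x : ℝ} {n : ℕ} (hx : 0 < x) (h : x < cfTail α (n + 1)) :
    cfTail α n < cfDigit α n + x⁻¹ := by
  linarith [cfTail_sub_cfDigit α n, inv_strictAnti₀ hx h]

theorem lt_cfTail_of_cfTail_succ_lt (hα : Irrational α) {y : ℝ} {n : ℕ}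
    (h : cfTail α (n + 1) < y) : cfDigit α n + y⁻¹ < cfTail α n := by
  linarith [cfTail_sub_cfDigit α n,
    inv_strictAnti₀ (zero_lt_one.trans (one_lt_cfTail_succ hα n)) h]

@[simp]
theorem cfStar_zero (α : ℝ) : cfStar α 0 = 0 := by
  simp [cfStar, finCF]

theorem cfStar_succ (α : ℝ) (n : ℕ) :
    cfStar α (n + 1) = (cfDigit α (n + 1) + cfStar α n)⁻¹ := by
  simp [cfStar, List.range'_1_concat, finCF, add_comm 1 n]

theorem cfStar_nonneg (hα : Irrational α) : ∀ n, 0 ≤ cfStar α n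
  | 0 => by simp
  | n + 1 => by
    have : (1 : ℝ) ≤ cfDigit α (n + 1) := by exact_mod_cast one_le_cfDigit_succ hα n
    rw [cfStar_succ]
    have := cfStar_nonneg hα n
    positivity

theorem cfStar_le_one (hα : Irrational α) : ∀ n, cfStar α n ≤ 1
  | 0 => by simp
  | n + 1 => by
    have : (1 : ℝ) ≤ cfDigit α (n + 1) := by exact_mod_cast one_le_cfDigit_succ hα n
    rw [cfStar_succ]
    exact inv_le_one_of_one_le₀ (by linarith [cfStar_nonneg hα n])

theorem cfStar_succ_le (hα : Irrational α) {x : ℝ} {n : ℕ} (hx : 0 ≤ x)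
    (h : x ≤ cfStar α n) : cfStar α (n + 1) ≤ (cfDigit α (n + 1) + x)⁻¹ := by
  have : (1 : ℝ) ≤ cfDigit α (n + 1) := by exact_mod_cast one_le_cfDigit_succ hα n
  rw [cfStar_succ]
  exact inv_anti₀ (by linarith) (by linarith)

theorem le_cfStar_succ (hα : Irrational α) {y : ℝ} {n : ℕ} (h : cfStar α n ≤ y) :
    (cfDigit α (n + 1) + y)⁻¹ ≤ cfStar α (n + 1) := by
  have : (1 : ℝ) ≤ cfDigit α (n + 1) := by exact_mod_cast one_le_cfDigit_succ hα n
  rw [cfStar_succ]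
  exact inv_anti₀ (by linarith [cfStar_nonneg hα n]) (by linarith)

theorem cfNum_succ_mul_cfDen_sub (α : ℝ) :
    ∀ n, cfNum α (n + 1) * cfDen α n - cfNum α n * cfDen α (n + 1) = (-1) ^ n
  | 0 => by simp only [cfNum, cfDen]; ring
  | n + 1 => by
    rw [pow_succ, ← cfNum_succ_mul_cfDen_sub α n, cfNum.eq_3, cfDen.eq_3]
    ring

theorem isCoprime_cfNum_cfDen (α : ℝ) : ∀ n, IsCoprime (cfNum α n) (cfDen α n)
  | 0 => isCoprime_one_right
  | n + 1 => by
    have hsq : ((-1) ^ n * (-1) ^ n : ℤ) = 1 := by rw [← mul_pow]; simp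
    exact ⟨(-1) ^ n * cfDen α n, -((-1) ^ n * cfNum α n),
      by linear_combination (-1) ^ n * cfNum_succ_mul_cfDen_sub α n + hsq⟩

theorem two_mul_ne_convergent (α : ℝ) (k n : ℕ) :
    (2 * cfNum α k, 2 * cfDen α k) ≠ (cfNum α n, cfDen α n) := by
  intro h
  obtain ⟨hp, hq⟩ := Prod.mk.inj h
  have h2 := (isCoprime_cfNum_cfDen α n).isUnit_of_dvd' (hp ▸ dvd_mul_right 2 _)
    (hq ▸ dvd_mul_right 2 _)
  rcases Int.isUnit_iff.1 h2 with h | h <;> norm_num at h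

theorem one_le_cfDen (hα : Irrational α) (n : ℕ) : 1 ≤ cfDen α n := by
  induction n using Nat.twoStepInduction with
  | zero => rfl
  | one => exact one_le_cfDigit_succ hα 0
  | more n ih₀ ih₁ =>
    rw [cfDen.eq_3]
    nlinarith [one_le_cfDigit_succ hα (n + 1)]

theorem le_cfDen (hα : Irrational α) (n : ℕ) : (n : ℤ) ≤ cfDen α n := by
  induction n using Nat.twoStepInduction with
  | zero => exact zero_le_one
  | one => exact one_le_cfDigit_succ hα 0
  | more n _ ih₁ =>
    rw [cfDen.eq_3]
    push_cast at ih₁ ⊢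
    nlinarith [one_le_cfDigit_succ hα (n + 1), one_le_cfDen hα n]

theorem cfStar_succ_eq_div (hα : Irrational α) :
    ∀ n, cfStar α (n + 1) = (cfDen α n : ℝ) / cfDen α (n + 1)
  | 0 => by simp [cfStar_succ, cfDen]
  | n + 1 => by
    have hq : (cfDen α (n + 1) : ℝ) ≠ 0 := by
      exact_mod_cast (one_le_cfDen hα (n + 1)).trans_lt' zero_lt_one |>.ne'
    rw [cfStar_succ, cfStar_succ_eq_div hα n, cfDen.eq_3]
    push_cast
    field_simp

noncomputable def cfErr (α : ℝ) (n : ℕ) : ℝ := cfDen α n * α - cfNum α n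

theorem cfErr_add_two (α : ℝ) (n : ℕ) :
    cfErr α (n + 2) = cfDigit α (n + 2) * cfErr α (n + 1) + cfErr α n := by
  simp only [cfErr, cfNum.eq_3, cfDen.eq_3]
  push_cast
  ring

theorem cfTail_mul_cfErr_succ (hα : Irrational α) :
    ∀ n, cfTail α (n + 2) * cfErr α (n + 1) = -cfErr α n
  | 0 => by
    have h₀ : (α - cfDigit α 0) * cfTail α 1 = 1 := cfTail_sub_cfDigit_mul_cfTail_succ hα 0
    have h₁ := cfTail_sub_cfDigit_mul_cfTail_succ hα 1
    simp only [cfErr, cfNum, cfDen]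
    push_cast
    linear_combination cfTail α 2 * h₀ - (α - cfDigit α 0) * h₁
  | n + 1 => by
    have h := cfTail_sub_cfDigit_mul_cfTail_succ hα (n + 2)
    have ih := cfTail_mul_cfErr_succ hα n
    show cfTail α (n + 3) * cfErr α (n + 2) = -cfErr α (n + 1)
    rw [cfErr_add_two]
    linear_combination cfTail α (n + 3) * ih - cfErr α (n + 1) * h

theorem cfDen_mul_abs_cfErr (hα : Irrational α) (n : ℕ) :
    cfDen α (n + 1) * |cfErr α (n + 1)| = (cfTail α (n + 2) + cfStar α (n + 1))⁻¹ := by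
  have hq₀ : (1 : ℝ) ≤ cfDen α n := by exact_mod_cast one_le_cfDen hα n
  have hq₁ : (1 : ℝ) ≤ cfDen α (n + 1) := by exact_mod_cast one_le_cfDen hα (n + 1)
  have hD : 0 < (cfDen α (n + 1) : ℝ) * cfTail α (n + 2) + cfDen α n := by
    nlinarith [one_lt_cfTail_succ hα (n + 1)]
  have hdet : (cfNum α (n + 1) : ℝ) * cfDen α n - cfNum α n * cfDen α (n + 1) = (-1) ^ n := by
    exact_mod_cast cfNum_succ_mul_cfDen_sub α n
  have hE : ((cfDen α (n + 1) : ℝ) * cfTail α (n + 2) + cfDen α n) * cfErr α (n + 1) =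
      -(-1) ^ n := by
    have hrec := cfTail_mul_cfErr_succ hα n
    simp only [cfErr] at hrec ⊢
    linear_combination (cfDen α (n + 1) : ℝ) * hrec - hdet
  have habs : |cfErr α (n + 1)| = ((cfDen α (n + 1) : ℝ) * cfTail α (n + 2) + cfDen α n)⁻¹ := by
    have := congrArg abs hE
    rw [abs_mul, abs_of_pos hD, abs_neg, abs_pow, abs_neg, abs_one, one_pow] at this
    exact eq_inv_of_mul_eq_one_right this
  rw [habs, cfStar_succ_eq_div hα n]
  field_simp

theorem kappa4_succ (α : ℝ) (n : ℕ) :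
    kappa4 α (n + 1) = 4 / (cfTail α (n + 1) + cfStar α n) :=
  rfl

theorem psi2_nonneg (α t : ℝ) : 0 ≤ psi2 α t :=
  Real.sInf_nonneg (by rintro _ ⟨p, q, -, -, -, rfl⟩; exact abs_nonneg _)

theorem psi2_le_abs {p q : ℤ} {t : ℝ} (hq : 1 ≤ q) (hqt : (q : ℝ) ≤ t)
    (hpq : ∀ n, (p, q) ≠ (cfNum α n, cfDen α n)) : psi2 α t ≤ |q * α - p| :=
  csInf_le ⟨0, by rintro _ ⟨p, q, -, -, -, rfl⟩; exact abs_nonneg _⟩ ⟨p, q, hq, hqt, hpq, rfl⟩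

theorem two_mul_cfDen_mul_psi2_le (hα : Irrational α) (n : ℕ) :
    2 * cfDen α (n + 1) * psi2 α (2 * cfDen α (n + 1)) ≤ kappa4 α (n + 2) := by
  have hq := one_le_cfDen hα (n + 1)
  have hψ : psi2 α (2 * cfDen α (n + 1)) ≤ |2 * cfErr α (n + 1)| := by
    have := psi2_le_abs (α := α) (t := 2 * cfDen α (n + 1)) (by omega) (by push_cast; rfl)
      (two_mul_ne_convergent α (n + 1))
    simpa [cfErr, mul_sub, mul_assoc] using this
  calc 2 * cfDen α (n + 1) * psi2 α (2 * cfDen α (n + 1))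
      ≤ 2 * cfDen α (n + 1) * |2 * cfErr α (n + 1)| := by gcongr
    _ = 4 * (cfDen α (n + 1) * |cfErr α (n + 1)|) := by rw [abs_mul, abs_two]; ring
    _ = kappa4 α (n + 2) := by rw [cfDen_mul_abs_cfErr hα, kappa4_succ, div_eq_mul_inv]

theorem kConst_le_of_frequently_kappa4_le (hα : Irrational α) {c : ℝ}
    (h : ∃ᶠ n in atTop, kappa4 α n ≤ c) : kConst α ≤ c := by
  have ht : Tendsto (fun n : ℕ => 2 * (cfDen α (n + 1) : ℝ)) atTop atTop := by
    refine tendsto_atTop_mono (fun n => ?_) tendsto_natCast_atTop_atTop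
    have : ((n + 1 : ℕ) : ℝ) ≤ cfDen α (n + 1) := by exact_mod_cast le_cfDen hα (n + 1)
    push_cast at this
    linarith
  have h₂ : ∃ᶠ n in atTop, kappa4 α (n + 2) ≤ c := by
    rwa [← map_add_atTop_eq_nat 2, frequently_map] at h
  refine liminf_le_of_frequently_le
    (ht.frequently (h₂.mono fun n hn => (two_mul_cfDen_mul_psi2_le hα n).trans hn)) ?_
  exact isBoundedUnder_of_eventually_ge
    ((eventually_ge_atTop 0).mono fun t ht => mul_nonneg ht (psi2_nonneg α t))

theorem kappa4_succ_le_of_four_le_cfDigit (hα : Irrational α) {m : ℕ}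
    (h4 : 4 ≤ cfDigit α (m + 1)) (h1 : cfDigit α (m + 2) = 1) :
    kappa4 α (m + 1) ≤ 8 / 9 := by
  have t2 : cfTail α (m + 2) < 2 := by
    have := cfTail_lt_of_lt_cfTail_succ one_pos (one_lt_cfTail_succ hα (m + 2))
    rw [h1] at this
    norm_num at this
    exact this
  have t1 : 9 / 2 < cfTail α (m + 1) := by
    have := lt_cfTail_of_cfTail_succ_lt hα t2
    have : (4 : ℝ) ≤ cfDigit α (m + 1) := by exact_mod_cast h4
    linarith
  rw [kappa4_succ, div_le_div_iff₀ (by linarith [cfStar_nonneg hα m]) (by norm_num)]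
  linarith [cfStar_nonneg hα m]

theorem kappa4_le_of_cfDigit_le_three (hα : Irrational α) {m : ℕ} (h3 : cfDigit α (m + 1) ≤ 3)
    (hpat : cfDigit α (m + 2) = 1 ∧ cfDigit α (m + 3) = 1 ∧ cfDigit α (m + 4) = 3 ∧
      cfDigit α (m + 5) = 1 ∧ cfDigit α (m + 6) = 1 ∧ cfDigit α (m + 7) = 1) :
    kappa4 α (m + 4) ≤ 180 / 187 := by
  obtain ⟨a2, a3, a4, a5, a6, a7⟩ := hpat
  have t7 : cfTail α (m + 7) < 2 := by
    have := cfTail_lt_of_lt_cfTail_succ one_pos (one_lt_cfTail_succ hα (m + 7))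
    rw [a7] at this
    norm_num at this
    exact this
  have t6 : 3 / 2 < cfTail α (m + 6) := by
    have := lt_cfTail_of_cfTail_succ_lt hα t7
    rw [a6] at this
    norm_num at this
    linarith
  have t5 : cfTail α (m + 5) < 5 / 3 := by
    have := cfTail_lt_of_lt_cfTail_succ (by norm_num) t6
    rw [a5] at this
    norm_num at this
    linarith
  have t4 : 18 / 5 < cfTail α (m + 4) := by
    have := lt_cfTail_of_cfTail_succ_lt hα t5
    rw [a4] at this
    norm_num at this
    linarith
  have s1 : 1 / 4 ≤ cfStar α (m + 1) := by
    have : (cfDigit α (m + 1) : ℝ) ≤ 3 := by exact_mod_cast h3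
    have : (1 : ℝ) ≤ cfDigit α (m + 1) := by exact_mod_cast one_le_cfDigit_succ hα m
    calc (1 : ℝ) / 4 ≤ ((cfDigit α (m + 1) : ℝ) + 1)⁻¹ := by
          rw [one_div]; exact inv_anti₀ (by linarith) (by linarith)
      _ ≤ cfStar α (m + 1) := le_cfStar_succ hα (cfStar_le_one hα m)
  have s2 : cfStar α (m + 2) ≤ 4 / 5 := by
    have := cfStar_succ_le hα (by norm_num) s1
    rw [a2] at this
    norm_num at this
    exact this
  have s3 : 5 / 9 ≤ cfStar α (m + 3) := by
    have := le_cfStar_succ hα s2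
    rw [a3] at this
    norm_num at this
    exact this
  calc kappa4 α (m + 4) = 4 / (cfTail α (m + 4) + cfStar α (m + 3)) := kappa4_succ α (m + 3)
    _ ≤ 4 / (18 / 5 + 5 / 9) := by gcongr
    _ = 180 / 187 := by norm_num

theorem frequently_kappa4_le_of_pattern (hα : Irrational α)
    (hpat : ∃ᶠ n in atTop,
      cfDigit α n = 1 ∧ cfDigit α (n + 1) = 1 ∧ cfDigit α (n + 2) = 3 ∧
      cfDigit α (n + 3) = 1 ∧ cfDigit α (n + 4) = 1 ∧ cfDigit α (n + 5) = 1) :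
    ∃ᶠ n in atTop, kappa4 α n ≤ 180 / 187 := by
  rw [frequently_atTop] at hpat ⊢
  intro b
  obtain ⟨n, hn, hpat⟩ := hpat (b + 2)
  obtain ⟨m, rfl⟩ : ∃ m, n = m + 2 := ⟨n - 2, by omega⟩
  by_cases h3 : cfDigit α (m + 1) ≤ 3
  · exact ⟨m + 4, by omega, kappa4_le_of_cfDigit_le_three hα h3 hpat⟩
  · refine ⟨m + 1, by omega, ?_⟩
    exact (kappa4_succ_le_of_four_le_cfDigit hα (by omega) hpat.1).trans (by norm_num)

end

theorem stmt_16_general (α : ℝ) (hα : Irrational α)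
    (hpat : ∃ᶠ n in atTop,
      cfDigit α n = 1 ∧ cfDigit α (n + 1) = 1 ∧ cfDigit α (n + 2) = 3 ∧
      cfDigit α (n + 3) = 1 ∧ cfDigit α (n + 4) = 1 ∧ cfDigit α (n + 5) = 1) :
    kConst α ≤ 180 / 187 :=
  kConst_le_of_frequently_kappa4_le hα (frequently_kappa4_le_of_pattern hα hpat)

/-- If `α` is irrational, equivalent neither to `(1+√5)/2` nor to `(1+√17)/2`,
with `aₙ ∈ {1, 3}` for infinitely many `n`, and for infinitely many `n` one has the
pattern `1, 1, 3, 1, 1, 1`, then `𝔨(α) ≤ 180/187`. -/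
theorem stmt_16 (α : ℝ) (hα : Irrational α)
    (h5 : ¬ CFEquiv α ((1 + Real.sqrt 5) / 2))
    (h17 : ¬ CFEquiv α ((1 + Real.sqrt 17) / 2))
    (hmem : ∃ᶠ n in atTop, cfDigit α n = 1 ∨ cfDigit α n = 3)
    (hpat : ∃ᶠ n in atTop,
      cfDigit α n = 1 ∧ cfDigit α (n + 1) = 1 ∧ cfDigit α (n + 2) = 3 ∧
      cfDigit α (n + 3) = 1 ∧ cfDigit α (n + 4) = 1 ∧ cfDigit α (n + 5) = 1) :
    kConst α ≤ 180 / 187 :=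
  stmt_16_general α hα hpat
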